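/- (Monotonicity and full convergence of the damped pressure) For every continuous f : X → ℝ, the function β ↦ P(−β a + f) is nonincreasing on [0,∞) and bounded below by P_K(f); consequently the limit lim_{β→+∞} P(−β a + f) exists and equals P_K(f), where P(g) := sup_{μ∈𝔐} ( h(μ) + ∫_X g dμ ) and P_K(f) := sup { h(μ) + ∫_X f dμ : μ ∈ 𝔐, μ(K) = 1 }. -/

import Mathlib

open MeasureTheory Filter Topology Set

noncomputable section

/-- A continuous flow on `X`. -/
def IsFlow {X : Type*} [TopologicalSpace X] (Φ : ℝ → X → X) : Prop :=
  Continuous (fun p : ℝ × X => Φ p.1 p.2) ∧ Φ 0 = id ∧ ∀ t s : ℝ, Φ (t + s) = Φ t ∘ Φ s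

/-- The set of flow-invariant Borel probability measures. -/
def Minv {X : Type*} [TopologicalSpace X] [MeasurableSpace X] (Φ : ℝ → X → X) :
    Set (ProbabilityMeasure X) :=
  {μ | ∀ t : ℝ, (μ : Measure X).map (Φ t) = (μ : Measure X)}

/-- The topological support of a measure. -/
def msupport {X : Type*} [TopologicalSpace X] [MeasurableSpace X] (μ : Measure X) : Set X :=
  {x | ∀ U : Set X, IsOpen U → x ∈ U → 0 < μ U}

/-- The undamped set `K`: the closure of the union of the supports of all
minimizing invariant measures. -/
def Kset {X : Type*} [TopologicalSpace X] [MeasurableSpace X] (Φ : ℝ → X → X) (a : X → ℝ) :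
    Set X :=
  closure (⋃ μ ∈ {μ ∈ Minv Φ | ∫ x, a x ∂(μ : Measure X) = 0}, msupport (μ : Measure X))

/-- Abstract pressure: `P(g) = sup over invariant measures of h(μ) + ∫ g dμ`. -/
def Pres {X : Type*} [TopologicalSpace X] [MeasurableSpace X] (Φ : ℝ → X → X)
    (h : ProbabilityMeasure X → ℝ) (g : X → ℝ) : ℝ :=
  sSup {r : ℝ | ∃ μ ∈ Minv Φ, r = h μ + ∫ x, g x ∂(μ : Measure X)}

/-- Abstract pressure on `K`: sup over invariant measures with `μ(K) = 1`. -/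
def PresK {X : Type*} [TopologicalSpace X] [MeasurableSpace X] (Φ : ℝ → X → X) (a : X → ℝ)
    (h : ProbabilityMeasure X → ℝ) (f : X → ℝ) : ℝ :=
  sSup {r : ℝ | ∃ μ ∈ Minv Φ,
    (μ : Measure X) (Kset Φ a) = 1 ∧ r = h μ + ∫ x, f x ∂(μ : Measure X)}

/-!
Monotonicity in `β` holds because `a ≥ 0`, and the lower bound because `a` vanishes on `K`,
so a measure with `μ(K) = 1` does not see the damping term at all.

For the limit, suppose `P(-n a + f) ≥ c > P_K(f)` for every `n`, and fix `c'` in between. The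
invariant measures with `h(μ) + ∫ (-n a + f) dμ ≥ c'` form nonempty closed sets (by upper
semicontinuity of `h`, as the invariant measures form a closed subset), decreasing in `n`; by
compactness of the space of probability measures they share a point `ν`. Since
`h(ν) + ∫ f dν - n ∫ a dν ≥ c'` for all `n`, we get `∫ a dν = 0`, hence `ν(K) = 1` and
`h(ν) + ∫ f dν ≤ P_K(f) < c'`, a contradiction.
-/

theorem UpperSemicontinuousOn.isClosed_inter_preimage_Ici {α β : Type*} [TopologicalSpace α]
    [LinearOrder β] {f : α → β} {s : Set α} (hf : UpperSemicontinuousOn f s) (hs : IsClosed s)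
    (b : β) : IsClosed (s ∩ f ⁻¹' Ici b) := by
  obtain ⟨v, hv, hsv⟩ := upperSemicontinuousOn_iff_preimage_Ici.1 hf b
  exact hsv ▸ hs.inter hv

theorem IsFlow.continuous_apply {X : Type*} [TopologicalSpace X] {Φ : ℝ → X → X}
    (hΦ : IsFlow Φ) (t : ℝ) : Continuous (Φ t) :=
  hΦ.1.comp (Continuous.prodMk_right t)

theorem msupport_eq_support {X : Type*} [TopologicalSpace X] [MeasurableSpace X]
    (μ : Measure X) : msupport μ = μ.support := by
  rw [Measure.support_eq_forall_isOpen]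
  ext x
  exact forall_congr' fun U => ⟨fun h hx hU => h hU hx, fun h hU hx => h hx hU⟩

section Invariant

variable {X : Type*} [TopologicalSpace X] [MeasurableSpace X] {Φ : ℝ → X → X} {a : X → ℝ}

theorem isClosed_Minv [HasOuterApproxClosed X] [BorelSpace X] (hΦ : ∀ t, Continuous (Φ t)) :
    IsClosed (Minv Φ) := by
  have : Minv Φ = ⋂ t, {μ | μ.map (hΦ t).measurable.aemeasurable = μ} := by
    ext μ
    simp only [Minv, mem_ofPred_eq, mem_iInter, ← ProbabilityMeasure.toMeasure_injective.eq_iff,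
      ProbabilityMeasure.toMeasure_map]
  rw [this]
  exact isClosed_iInter fun t =>
    isClosed_eq (ProbabilityMeasure.continuous_map (hΦ t)) continuous_id

variable [OpensMeasurableSpace X]

theorem Kset_subset_preimage_zero [CompactSpace X] (ha : Continuous a) (ha0 : 0 ≤ a) :
    Kset Φ a ⊆ a ⁻¹' {0} := by
  have hclosed : IsClosed (a ⁻¹' {0}) := isClosed_singleton.preimage ha
  refine closure_minimal (iUnion₂_subset fun μ hμ => ?_) hclosed
  have hae : a =ᵐ[(μ : Measure X)] 0 := (integral_eq_zero_iff_of_nonneg ha0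
    (ha.integrable_of_hasCompactSupport (HasCompactSupport.of_compactSpace a))).1 hμ.2
  rw [msupport_eq_support]
  exact Measure.support_subset_of_isClosed hclosed hae

theorem measure_Kset_eq_one [HereditarilyLindelofSpace X] {μ : ProbabilityMeasure X}
    (hμ : μ ∈ Minv Φ) (hμa : ∫ x, a x ∂(μ : Measure X) = 0) :
    (μ : Measure X) (Kset Φ a) = 1 := by
  have hsupp : (μ : Measure X).support ⊆ Kset Φ a := by
    rw [← msupport_eq_support]
    exact (subset_biUnion_of_mem (u := fun ν : ProbabilityMeasure X => msupport (ν : Measure X))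
      (show μ ∈ {ν ∈ Minv Φ | ∫ x, a x ∂(ν : Measure X) = 0} from ⟨hμ, hμa⟩)).trans
      subset_closure
  exact (prob_compl_eq_zero_iff isClosed_closure.measurableSet).1
    (measure_mono_null (compl_subset_compl.2 hsupp) Measure.measure_compl_support)

theorem integral_neg_mul_add_eq_of_measure_Kset_eq_one [CompactSpace X] (ha : Continuous a)
    (ha0 : 0 ≤ a) (f : X → ℝ) {μ : ProbabilityMeasure X} (hμK : (μ : Measure X) (Kset Φ a) = 1)
    (β : ℝ) : ∫ x, (-β * a x + f x) ∂(μ : Measure X) = ∫ x, f x ∂(μ : Measure X) := by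
  have hK : ∀ᵐ x ∂(μ : Measure X), x ∈ Kset Φ a :=
    (prob_compl_eq_zero_iff isClosed_closure.measurableSet).2 hμK
  refine integral_congr_ae (hK.mono fun x hx => ?_)
  have hax : a x = 0 := Kset_subset_preimage_zero ha ha0 hx
  simp [hax]

end Invariant

theorem integral_neg_mul_add {X : Type*} [TopologicalSpace X] [CompactSpace X]
    [MeasurableSpace X] [OpensMeasurableSpace X] {a f : X → ℝ} (ha : Continuous a)
    (hf : Continuous f) (μ : Measure X) [IsFiniteMeasure μ] (β : ℝ) :
    ∫ x, (-β * a x + f x) ∂μ = -β * ∫ x, a x ∂μ + ∫ x, f x ∂μ := by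
  rw [integral_add, integral_const_mul]
  · exact (ha.integrable_of_hasCompactSupport (HasCompactSupport.of_compactSpace a)).const_mul _
  · exact hf.integrable_of_hasCompactSupport (HasCompactSupport.of_compactSpace f)

section Pressure

variable {X : Type*} [TopologicalSpace X] [MeasurableSpace X] {Φ : ℝ → X → X} {a : X → ℝ}
  {h : ProbabilityMeasure X → ℝ} {g : X → ℝ}

theorem Pres_le (hne : (Minv Φ).Nonempty) {c : ℝ}
    (hc : ∀ μ ∈ Minv Φ, h μ + ∫ x, g x ∂(μ : Measure X) ≤ c) : Pres Φ h g ≤ c := by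
  obtain ⟨μ, hμ⟩ := hne
  refine csSup_le ⟨_, μ, hμ, rfl⟩ ?_
  rintro _ ⟨ν, hν, rfl⟩
  exact hc ν hν

theorem exists_lt_of_lt_Pres (hne : (Minv Φ).Nonempty) {c : ℝ} (hc : c < Pres Φ h g) :
    ∃ μ ∈ Minv Φ, c < h μ + ∫ x, g x ∂(μ : Measure X) := by
  obtain ⟨μ, hμ⟩ := hne
  obtain ⟨_, ⟨ν, hν, rfl⟩, hlt⟩ := exists_lt_of_lt_csSup (by exact ⟨_, μ, hμ, rfl⟩) hc
  exact ⟨ν, hν, hlt⟩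

theorem PresK_le (hne : ∃ μ ∈ Minv Φ, (μ : Measure X) (Kset Φ a) = 1) {c : ℝ}
    (hc : ∀ μ ∈ Minv Φ, (μ : Measure X) (Kset Φ a) = 1 → h μ + ∫ x, g x ∂(μ : Measure X) ≤ c) :
    PresK Φ a h g ≤ c := by
  obtain ⟨μ, hμ, hμK⟩ := hne
  refine csSup_le ⟨_, μ, hμ, hμK, rfl⟩ ?_
  rintro _ ⟨ν, hν, hνK, rfl⟩
  exact hc ν hν hνK

variable [CompactSpace X] [T2Space X] [BorelSpace X]

theorem le_Pres (hh : BddAbove (h '' Minv Φ)) (hg : Continuous g) {μ : ProbabilityMeasure X}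
    (hμ : μ ∈ Minv Φ) : h μ + ∫ x, g x ∂(μ : Measure X) ≤ Pres Φ h g := by
  obtain ⟨C, hC⟩ := hh
  obtain ⟨M, hM⟩ := (isCompact_range
    (ProbabilityMeasure.continuous_integral_continuousMap (⟨g, hg⟩ : C(X, ℝ)))).bddAbove
  refine le_csSup ⟨C + M, ?_⟩ ⟨μ, hμ, rfl⟩
  rintro _ ⟨ν, hν, rfl⟩
  exact add_le_add (hC (mem_image_of_mem h hν)) (hM (mem_range_self ν))

theorem Pres_mono (hne : (Minv Φ).Nonempty) (hh : BddAbove (h '' Minv Φ)) {g₁ g₂ : X → ℝ}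
    (hg₁ : Continuous g₁) (hg₂ : Continuous g₂) (hle : g₁ ≤ g₂) : Pres Φ h g₁ ≤ Pres Φ h g₂ :=
  Pres_le hne fun _ hμ => (add_le_add_right (integral_mono
    (hg₁.integrable_of_hasCompactSupport (HasCompactSupport.of_compactSpace g₁))
    (hg₂.integrable_of_hasCompactSupport (HasCompactSupport.of_compactSpace g₂)) hle) _).trans
    (le_Pres hh hg₂ hμ)

theorem le_PresK (hh : BddAbove (h '' Minv Φ)) (hg : Continuous g) {μ : ProbabilityMeasure X}
    (hμ : μ ∈ Minv Φ) (hμK : (μ : Measure X) (Kset Φ a) = 1) :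
    h μ + ∫ x, g x ∂(μ : Measure X) ≤ PresK Φ a h g := by
  refine le_csSup ⟨Pres Φ h g, ?_⟩ ⟨μ, hμ, hμK, rfl⟩
  rintro _ ⟨ν, hν, -, rfl⟩
  exact le_Pres hh hg hν

end Pressure

theorem exists_nat_Pres_lt_of_PresK_lt {X : Type*} [MetricSpace X] [CompactSpace X]
    [MeasurableSpace X] [BorelSpace X] {Φ : ℝ → X → X} {a f : X → ℝ}
    {h : ProbabilityMeasure X → ℝ} (hΦ : ∀ t, Continuous (Φ t)) (ha : Continuous a)
    (ha0 : 0 ≤ a) (hne : (Minv Φ).Nonempty) (hh : BddAbove (h '' Minv Φ))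
    (husc : UpperSemicontinuousOn h (Minv Φ)) (hf : Continuous f) {c : ℝ}
    (hc : PresK Φ a h f < c) : ∃ n : ℕ, Pres Φ h (fun x => -n * a x + f x) < c := by
  by_contra! hge
  set c' := (PresK Φ a h f + c) / 2 with hc'
  let A : ℕ → Set (ProbabilityMeasure X) := fun n =>
    Minv Φ ∩ (fun μ => h μ + ∫ x, (-n * a x + f x) ∂(μ : Measure X)) ⁻¹' Ici c'
  have hA_closed (n : ℕ) : IsClosed (A n) := by
    have hint := ProbabilityMeasure.continuous_integral_continuousMap
      (⟨fun x => -n * a x + f x, by fun_prop⟩ : C(X, ℝ))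
    exact (husc.add (hint.upperSemicontinuous.upperSemicontinuousOn _)).isClosed_inter_preimage_Ici
      (isClosed_Minv hΦ) c'
  have hA_ne (n : ℕ) : (A n).Nonempty := by
    have : c' < Pres Φ h (fun x => -n * a x + f x) := by linarith [hge n]
    obtain ⟨μ, hμ, hlt⟩ := exists_lt_of_lt_Pres hne this
    exact ⟨μ, hμ, hlt.le⟩
  have hA_value {n : ℕ} {μ : ProbabilityMeasure X} (hμ : μ ∈ A n) :
      c' ≤ h μ - n * ∫ x, a x ∂(μ : Measure X) + ∫ x, f x ∂(μ : Measure X) := by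
    have := hμ.2
    simp only [mem_preimage, mem_Ici, integral_neg_mul_add ha hf] at this
    linarith
  have hA_anti (n : ℕ) : A (n + 1) ⊆ A n := by
    refine fun μ hμ => ⟨hμ.1, ?_⟩
    have := hA_value hμ
    have := integral_nonneg (μ := (μ : Measure X)) ha0
    simp only [mem_preimage, mem_Ici, integral_neg_mul_add ha hf]
    push_cast at *
    nlinarith
  obtain ⟨ν, hν⟩ := IsCompact.nonempty_iInter_of_sequence_nonempty_isCompact_isClosed A hA_anti
    hA_ne (hA_closed 0).isCompact hA_closed
  rw [mem_iInter] at hν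
  have hνM : ν ∈ Minv Φ := (hν 0).1
  have hνa : ∫ x, a x ∂(ν : Measure X) = 0 := by
    refine le_antisymm ?_ (integral_nonneg ha0)
    by_contra! hpos
    obtain ⟨n, hn⟩ := exists_nat_gt ((h ν + ∫ x, f x ∂(ν : Measure X) - c') /
      ∫ x, a x ∂(ν : Measure X))
    rw [div_lt_iff₀ hpos] at hn
    linarith [hA_value (hν n)]
  have hνK := le_PresK hh hf hνM (measure_Kset_eq_one hνM hνa)
  have := hA_value (hν 0)
  simp only [hνa, mul_zero, sub_zero] at this
  linarith

/-- The damped pressure `β ↦ P(-βa + f)` is nonincreasing on `[0,∞)`, bounded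
below by `P_K(f)`, and converges to `P_K(f)` as `β → ∞`. -/
theorem stmt14 {X : Type*} [MetricSpace X] [CompactSpace X] [MeasurableSpace X] [BorelSpace X]
    (Φ : ℝ → X → X) (hΦ : IsFlow Φ)
    (a : X → ℝ) (ha : Continuous a) (ha0 : ∀ x, 0 ≤ a x)
    (hmin : ∃ μ ∈ Minv Φ, ∫ x, a x ∂(μ : Measure X) = 0)
    (h : ProbabilityMeasure X → ℝ)
    (hbd : ∃ C : ℝ, ∀ μ ∈ Minv Φ, |h μ| ≤ C)
    (husc : UpperSemicontinuousOn h (Minv Φ))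
    (f : X → ℝ) (hf : Continuous f) :
    (∀ β₁ β₂ : ℝ, 0 ≤ β₁ → β₁ ≤ β₂ →
      Pres Φ h (fun x => -β₂ * a x + f x) ≤ Pres Φ h (fun x => -β₁ * a x + f x)) ∧
    (∀ β : ℝ, 0 ≤ β → PresK Φ a h f ≤ Pres Φ h (fun x => -β * a x + f x)) ∧
    Tendsto (fun β : ℝ => Pres Φ h (fun x => -β * a x + f x)) atTop
      (𝓝 (PresK Φ a h f)) := by
  obtain ⟨μ₀, hμ₀, hμ₀a⟩ := hmin
  have hne : (Minv Φ).Nonempty := ⟨μ₀, hμ₀⟩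
  have hh : BddAbove (h '' Minv Φ) := by
    obtain ⟨C, hC⟩ := hbd
    exact ⟨C, by rintro _ ⟨μ, hμ, rfl⟩; exact (abs_le.1 (hC μ hμ)).2⟩
  have hdamped (β : ℝ) : Continuous fun x => -β * a x + f x := by fun_prop
  have hanti {β₁ β₂ : ℝ} (h12 : β₁ ≤ β₂) :
      Pres Φ h (fun x => -β₂ * a x + f x) ≤ Pres Φ h (fun x => -β₁ * a x + f x) :=
    Pres_mono hne hh (hdamped β₂) (hdamped β₁) fun x => by nlinarith [ha0 x]
  have hlower (β : ℝ) : PresK Φ a h f ≤ Pres Φ h (fun x => -β * a x + f x) :=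
    PresK_le ⟨μ₀, hμ₀, measure_Kset_eq_one hμ₀ hμ₀a⟩ fun μ hμ hμK =>
      integral_neg_mul_add_eq_of_measure_Kset_eq_one ha ha0 f hμK β ▸ le_Pres hh (hdamped β) hμ
  refine ⟨fun _ _ _ h12 => hanti h12, fun β _ => hlower β, tendsto_order.2
    ⟨fun c hc => Eventually.of_forall fun β => hc.trans_le (hlower β), fun c hc => ?_⟩⟩
  obtain ⟨n, hn⟩ := exists_nat_Pres_lt_of_PresK_lt hΦ.continuous_apply ha ha0 hne hh husc hf hc
  filter_upwards [eventually_ge_atTop (n : ℝ)] with β hβ using (hanti hβ).trans_lt hn
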